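/- Let S be a subgroup of a finite group G and B an S-algebra over k. Then B is a k^S-Galois object if and only if the induced algebra Ind_S^G(B) is a k^G-Galois object. -/
import Mathlib


set_option synthInstance.maxHeartbeats 1000000
set_option maxHeartbeats 1000000

variable (k : Type*) [Field k] (G : Type*) [Group G]

section Ind
variable (S : Subgroup G) [Fintype S] (B : Type*) [Ring B] [Algebra k B]
  [MulSemiringAction S B] [SMulCommClass S k B]

/-- The induced algebra `Ind_S^G(B) = A_S(G,B) = {r : G → B | r(s g) = s • r(g)}`,
as a subalgebra of the function algebra `G → B`. -/
def indAlg : Subalgebra k (G → B) where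
  carrier := {r | ∀ (s : S) (g : G), r (s * g) = s • r g}
  mul_mem' := by
    intro p q hp hq s g
    simp only [Pi.mul_apply, hp s g, hq s g, smul_mul']
  add_mem' := by
    intro p q hp hq s g
    simp only [Pi.add_apply, hp s g, hq s g, smul_add]
  one_mem' := by intro s g; simp
  zero_mem' := by intro s g; simp
  algebraMap_mem' := by
    intro c s g
    simpa using (smul_algebraMap (A := B) (R := k) s c).symm

namespace indAlg

variable {G S B}

/-- The `G`-action on the induced algebra: `(g • r)(x) = r (x * g)`. -/
instance : MulSemiringAction G (indAlg k G S B) where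
  smul g r := ⟨fun x => (r : G → B) (x * g), fun s x => by
    simpa [mul_assoc] using r.2 s (x * g)⟩
  one_smul r := by
    apply Subtype.ext; funext x
    show (r : G → B) (x * 1) = (r : G → B) x
    rw [mul_one]
  mul_smul g h r := by
    apply Subtype.ext; funext x
    show (r : G → B) (x * (g * h)) = (r : G → B) (x * g * h)
    rw [mul_assoc]
  smul_zero g := rfl
  smul_add g r r' := rfl
  smul_one g := rfl
  smul_mul g r r' := rfl

@[simp] theorem smul_apply (g : G) (r : indAlg k G S B) (x : G) :
    ((g • r : indAlg k G S B) : G → B) x = (r : G → B) (x * g) := rfl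

instance : SMulCommClass G k (indAlg k G S B) :=
  ⟨fun g c r => by apply Subtype.ext; funext x; show c • (r : G → B) (x * g) = _ ; rfl⟩

end indAlg
end Ind

variable (k : Type*) [Field k] (G : Type*) [Group G]

section GAlg
variable (A : Type*) [Ring A] [Algebra k A] [MulSemiringAction G A] [SMulCommClass G k A]

/-- `A` has no nontrivial `G`-invariant left ideals. -/
def NoInvariantLeftIdeals : Prop :=
  ∀ J : Submodule A A, (∀ (g : G), ∀ a ∈ J, g • a ∈ J) → J = ⊥ ∨ J = ⊤

/-- The subalgebra of `G`-invariants of `A` is reduced to the scalars `k`. -/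
def InvariantsTrivial : Prop :=
  ∀ a : A, (∀ g : G, g • a = a) → ∃ c : k, a = algebraMap k A c

/-- The characterization of `k^G`-Galois objects used throughout the paper:
`dim_k A = |G|`, no nontrivial `G`-invariant left ideals, and `A^G = k`. -/
def IsGaloisObjectTriple [Fintype G] : Prop :=
  Module.finrank k A = Fintype.card G ∧ NoInvariantLeftIdeals G A ∧ InvariantsTrivial k G A

end GAlg

section Can
open TensorProduct
variable [Fintype G]
variable (A : Type*) [Ring A] [Algebra k A] [MulSemiringAction G A] [SMulCommClass G k A]

/-- The canonical (Galois) map `A ⊗ A → A ⊗ k^G ≅ (G → A)`,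
`a ⊗ b ↦ (g ↦ a * (g • b))`, i.e. `a ⊗ b ↦ a b₍₀₎ ⊗ b₍₁₎` for the coaction
`ρ(b) = ∑ g, (g • b) ⊗ t_g`. -/
noncomputable def canMap : A ⊗[k] A →ₗ[k] (G → A) :=
  TensorProduct.lift
    (LinearMap.mk₂ k (fun a b => fun g => a * (g • b))
      (fun a a' b => by funext g; simp [add_mul])
      (fun c a b => by funext g; simp [smul_mul_assoc])
      (fun a b b' => by funext g; simp [smul_add, mul_add])
      (fun c a b => by funext g; show a * g • (c • b) = c • (a * g • b); rw [smul_comm g c b, mul_smul_comm]))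

/-- A `k^G`-Galois object: coinvariants equal `k` and the canonical map is bijective. -/
def IsGaloisObject : Prop :=
  InvariantsTrivial k G A ∧ Function.Bijective (canMap k G A)

end Can

namespace IndGalois
open QuotientGroup
open scoped Classical

variable {k : Type*} [Field k] {G : Type*} [Group G]
variable {S : Subgroup G} {B : Type*} [Ring B] [Algebra k B]
  [MulSemiringAction S B] [SMulCommClass S k B]

theorem spec (r : indAlg k G S B) (s : S) (g : G) :
    (r : G → B) (↑s * g) = s • (r : G → B) g := r.2 s g

/-- Element of the induced algebra supported on the coset `S`, with value `b` at `1`. -/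
noncomputable def atS (b : B) : indAlg k G S B :=
  ⟨fun g => if h : g ∈ S then (⟨g, h⟩ : S) • b else 0, by
    intro s g
    dsimp only
    by_cases h : g ∈ S
    · rw [dif_pos h, dif_pos (mul_mem s.2 h), ← mul_smul]
      rfl
    · rw [dif_neg h, dif_neg, smul_zero]
      intro hc
      exact h (by simpa [mul_assoc] using mul_mem (inv_mem s.2) hc)⟩

theorem atS_apply_one (b : B) : ((atS (k := k) b : indAlg k G S B) : G → B) 1 = b := by
  show (if h : (1 : G) ∈ S then (⟨1, h⟩ : S) • b else 0) = b
  rw [dif_pos S.one_mem]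
  exact one_smul S b

theorem atS_apply (b : B) (g : G) :
    ((atS (k := k) b : indAlg k G S B) : G → B) g
      = if h : g ∈ S then (⟨g, h⟩ : S) • b else 0 := rfl

/-- Indicator function of the right coset `S * h`. -/
noncomputable def chi (h : G) : indAlg k G S B :=
  ⟨fun g => if g * h⁻¹ ∈ S then 1 else 0, by
    intro s g
    have key : (↑s * g) * h⁻¹ ∈ S ↔ g * h⁻¹ ∈ S := by
      constructor
      · intro hc
        have := mul_mem (inv_mem s.2) hc
        simpa [mul_assoc] using this
      · intro hc
        have := mul_mem s.2 hc
        simpa [mul_assoc] using this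
    dsimp only
    by_cases hm : g * h⁻¹ ∈ S
    · rw [if_pos hm, if_pos (key.2 hm), smul_one]
    · rw [if_neg hm, if_neg (fun hc => hm (key.1 hc)), smul_zero]⟩

theorem chi_apply (h g : G) :
    ((chi (k := k) (S := S) (B := B) h : indAlg k G S B) : G → B) g
      = if g * h⁻¹ ∈ S then 1 else 0 := rfl

theorem sum_chi [Fintype G] [Fintype (Quotient (rightRel S))] :
    (∑ q : Quotient (rightRel S), chi (k := k) (S := S) (B := B) (Quotient.out q)) = 1 := by
  classical
  apply Subtype.ext
  have hc : ((∑ q : Quotient (rightRel S), chi (k := k) (S := S) (B := B) (Quotient.out q) :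
      indAlg k G S B) : G → B)
      = ∑ q : Quotient (rightRel S), ((chi (k := k) (S := S) (B := B) (Quotient.out q) :
        indAlg k G S B) : G → B) :=
    map_sum (indAlg k G S B).val _ _
  rw [hc]
  funext x
  rw [Finset.sum_apply]
  have : ∀ q : Quotient (rightRel S),
      ((chi (k := k) (S := S) (B := B) (Quotient.out q) : indAlg k G S B) : G → B) x
        = if q = Quotient.mk _ x then 1 else 0 := by
    intro q
    rw [chi_apply]
    congr 1
    rw [eq_iff_iff]
    constructor
    · intro hm
      rw [← Quotient.out_eq q]
      exact Quotient.sound (rightRel_apply.2 hm)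
    · intro hq
      have : Quotient.mk (rightRel S) (Quotient.out q) = Quotient.mk _ x := by
        rw [Quotient.out_eq, hq]
      exact rightRel_apply.1 (Quotient.exact this)
  simp only [this]
  simp


/-- Evaluation at chosen coset representatives, a linear equivalence
`Ind_S^G(B) ≃ (S\G → B)`. -/
noncomputable def evalQ : indAlg k G S B ≃ₗ[k] (Quotient (rightRel S) → B) where
  toFun r := fun q => (r : G → B) (Quotient.out q)
  map_add' r r' := rfl
  map_smul' c r := rfl
  invFun f := ⟨fun g =>
      (⟨g * (Quotient.out (Quotient.mk (rightRel S) g))⁻¹,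
        rightRel_apply.1 (Quotient.exact (Quotient.out_eq (Quotient.mk (rightRel S) g)))⟩ : S)
        • f (Quotient.mk (rightRel S) g), by
    intro s g
    dsimp only
    have hq : Quotient.mk (rightRel S) (↑s * g) = Quotient.mk (rightRel S) g :=
      (Quotient.sound (rightRel_apply.2 (by simpa using s.2))).symm
    have : ∀ (q : Quotient (rightRel S)) (hq1 : Quotient.mk (rightRel S) (↑s * g) = q)
        (hq2 : Quotient.mk (rightRel S) g = q),
        (⟨(↑s * g) * (Quotient.out q)⁻¹,
          by rw [← hq1]; exact rightRel_apply.1 (Quotient.exact (by rw [Quotient.out_eq, hq1]))⟩ : S) • f q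
        = s • ((⟨g * (Quotient.out q)⁻¹,
          by rw [← hq2]; exact rightRel_apply.1 (Quotient.exact (by rw [Quotient.out_eq, hq2]))⟩ : S) • f q) := by
      intro q hq1 hq2
      rw [← mul_smul]
      congr 1
      apply Subtype.ext
      simp [mul_assoc]
    have main := this (Quotient.mk (rightRel S) g) hq rfl
    convert main using 3 <;> rw [hq]⟩
  left_inv r := by
    apply Subtype.ext
    funext g
    dsimp only
    set q := Quotient.mk (rightRel S) g with hqdef
    have hmem : g * (Quotient.out q)⁻¹ ∈ S :=
      rightRel_apply.1 (Quotient.exact (Quotient.out_eq q))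
    have := (spec r ⟨g * (Quotient.out q)⁻¹, hmem⟩ (Quotient.out q)).symm
    simpa [mul_assoc] using this
  right_inv f := by
    funext q
    dsimp only
    have h1 : Quotient.mk (rightRel S) (Quotient.out q) = q := Quotient.out_eq q
    have key : ∀ (q' : Quotient (rightRel S)) (hq' : q' = q)
        (h : Quotient.out q * (Quotient.out q')⁻¹ ∈ S),
        (⟨Quotient.out q * (Quotient.out q')⁻¹, h⟩ : S) • f q' = f q := by
      intro q' hq' h
      subst hq'
      rw [show (⟨Quotient.out q' * (Quotient.out q')⁻¹, h⟩ : S) = 1 from Subtype.ext (by simp),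
        one_smul]
    exact key _ h1 _

theorem finrank_indAlg [Fintype G] :
    Module.finrank k (indAlg k G S B)
      = Nat.card (Quotient (rightRel S)) * Module.finrank k B := by
  classical
  rw [(evalQ (k := k) (G := G) (S := S) (B := B)).finrank_eq]
  by_cases hB : FiniteDimensional k B
  · rw [Module.finrank_pi_fintype, Finset.sum_const, Finset.card_univ, smul_eq_mul,
      Nat.card_eq_fintype_card]
  · have h1 : ¬ FiniteDimensional k (Quotient (rightRel S) → B) := by
      intro hfd
      have : Function.Surjective
          (LinearMap.proj (R := k) (φ := fun _ : Quotient (rightRel S) => B)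
            (Quotient.mk (rightRel S) (1 : G))) :=
        fun b => ⟨fun _ => b, rfl⟩
      exact hB (Module.Finite.of_surjective _ this)
    rw [Module.finrank_of_infinite_dimensional h1,
      Module.finrank_of_infinite_dimensional hB, mul_zero]


theorem invariantsTrivial_iff :
    InvariantsTrivial k S B ↔ InvariantsTrivial k G (indAlg k G S B) := by
  constructor
  · intro hB r hr
    have hconst : ∀ g : G, (r : G → B) g = (r : G → B) 1 := by
      intro g
      have := congrArg (fun t : indAlg k G S B => (t : G → B) 1) (hr g)
      simpa using this
    have hinv : ∀ s : S, s • (r : G → B) 1 = (r : G → B) 1 := by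
      intro s
      rw [← spec r s 1, mul_one, hconst ↑s]
    obtain ⟨c, hc⟩ := hB _ hinv
    refine ⟨c, ?_⟩
    apply Subtype.ext
    funext g
    have : ((algebraMap k (indAlg k G S B) c : indAlg k G S B) : G → B) g
        = algebraMap k B c := rfl
    rw [this, hconst g, hc]
  · intro hI b hb
    set r : indAlg k G S B := ⟨fun _ => b, fun s _ => (hb s).symm⟩ with hrdef
    have hr : ∀ g : G, g • r = r := fun g => Subtype.ext rfl
    obtain ⟨c, hc⟩ := hI r hr
    refine ⟨c, ?_⟩
    have := congrArg (fun t : indAlg k G S B => (t : G → B) 1) hc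
    exact this

theorem noInvariantLeftIdeals_ind (hB : NoInvariantLeftIdeals S B) [Fintype G] :
    NoInvariantLeftIdeals G (indAlg k G S B) := by
  classical
  intro J hJ
  -- the ideal of values at 1
  set J1 : Submodule B B :=
    { carrier := (fun r : indAlg k G S B => (r : G → B) 1) '' J
      add_mem' := by
        rintro _ _ ⟨r, hr, rfl⟩ ⟨r', hr', rfl⟩
        exact ⟨r + r', J.add_mem hr hr', rfl⟩
      zero_mem' := ⟨0, J.zero_mem, rfl⟩
      smul_mem' := by
        rintro b _ ⟨r, hr, rfl⟩
        refine ⟨atS b * r, J.smul_mem (atS b) hr, ?_⟩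
        show ((atS b : indAlg k G S B) : G → B) 1 * (r : G → B) 1 = _
        rw [atS_apply_one]
        rfl } with hJ1def
  have hJ1inv : ∀ (s : S), ∀ b ∈ J1, s • b ∈ J1 := by
    rintro s _ ⟨r, hr, rfl⟩
    refine ⟨(↑s : G) • r, hJ ↑s r hr, ?_⟩
    have hs := spec r s 1
    rw [mul_one] at hs
    show (r : G → B) (1 * ↑s) = s • (r : G → B) 1
    rw [one_mul, hs]
  rcases hB J1 hJ1inv with h1 | h1
  · left
    rw [eq_bot_iff]
    intro r hr
    have hz : ∀ g : G, (r : G → B) g = 0 := by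
      intro g
      have hmem : ((g • r : indAlg k G S B) : G → B) 1 ∈ J1 := ⟨g • r, hJ g r hr, rfl⟩
      rw [h1] at hmem
      simpa using hmem
    have : r = 0 := Subtype.ext (funext hz)
    simp [this]
  · right
    have hone : ∀ b : B, b ∈ J1 := fun b => h1 ▸ Submodule.mem_top
    -- each coset indicator lies in J
    have hchi : ∀ h : G, chi (k := k) (S := S) (B := B) h ∈ J := by
      intro h
      obtain ⟨u, hu, hu1⟩ := hone 1
      set v : indAlg k G S B := h⁻¹ • u with hvdef
      have hv : v ∈ J := hJ h⁻¹ u hu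
      have hvh : (v : G → B) h = 1 := by
        show (u : G → B) (h * h⁻¹) = 1
        rw [mul_inv_cancel]
        exact hu1
      have hchiv : chi (k := k) (S := S) (B := B) h
          = chi (k := k) (S := S) (B := B) h * v := by
        apply Subtype.ext
        funext x
        show (if x * h⁻¹ ∈ S then (1 : B) else 0)
          = (if x * h⁻¹ ∈ S then (1 : B) else 0) * (v : G → B) x
        by_cases hm : x * h⁻¹ ∈ S
        · rw [if_pos hm, one_mul]
          have hx : x = (⟨x * h⁻¹, hm⟩ : S) * h := by simp
          rw [hx, spec v ⟨x * h⁻¹, hm⟩ h, hvh, smul_one]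
        · rw [if_neg hm, zero_mul]
      rw [hchiv]
      exact J.smul_mem _ hv
    have h1J : (1 : indAlg k G S B) ∈ J := by
      rw [← sum_chi (k := k) (G := G) (S := S) (B := B)]
      exact Submodule.sum_mem J fun q _ => hchi (Quotient.out q)
    rw [Submodule.eq_top_iff']
    intro x
    have := J.smul_mem x h1J
    simpa using this

theorem noInvariantLeftIdeals_of_ind (hI : NoInvariantLeftIdeals G (indAlg k G S B)) :
    NoInvariantLeftIdeals S B := by
  intro J hJ
  set Jhat : Submodule (indAlg k G S B) (indAlg k G S B) :=
    { carrier := {r : indAlg k G S B | ∀ g : G, (r : G → B) g ∈ J}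
      add_mem' := fun hr hr' g => J.add_mem (hr g) (hr' g)
      zero_mem' := fun g => J.zero_mem
      smul_mem' := by
        intro c r hr g
        show (c : G → B) g * (r : G → B) g ∈ J
        exact J.smul_mem _ (hr g) } with hJhatdef
  have hJhatinv : ∀ (g : G), ∀ r ∈ Jhat, g • r ∈ Jhat := by
    intro g r hr x
    exact hr (x * g)
  rcases hI Jhat hJhatinv with h1 | h1
  · left
    rw [eq_bot_iff]
    intro b hb
    have hmem : atS (k := k) (G := G) b ∈ Jhat := by
      intro g
      rw [atS_apply]
      by_cases h : g ∈ S
      · rw [dif_pos h]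
        exact hJ _ _ hb
      · rw [dif_neg h]
        exact J.zero_mem
    rw [h1] at hmem
    have : atS (k := k) (G := G) b = 0 := hmem
    have hb0 : b = 0 := by
      rw [← atS_apply_one (k := k) (G := G) (S := S) b, this]
      rfl
    simp [hb0]
  · right
    have : (1 : indAlg k G S B) ∈ Jhat := h1 ▸ Submodule.mem_top
    have h1J : (1 : B) ∈ J := this 1
    rw [Submodule.eq_top_iff']
    intro b
    simpa using J.smul_mem b h1J

end IndGalois

/-- `B` is a `k^S`-Galois object iff `Ind_S^G(B)` is a `k^G`-Galois object. -/
theorem indAlg_galois_iff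
    (k : Type*) [Field k] (G : Type*) [Group G] [Fintype G]
    (S : Subgroup G) [Fintype S] (B : Type*) [Ring B] [Algebra k B]
    [MulSemiringAction S B] [SMulCommClass S k B] :
    IsGaloisObjectTriple k S B ↔ IsGaloisObjectTriple k G (indAlg k G S B) := by
  classical
  have hdim : Module.finrank k (indAlg k G S B)
      = Nat.card (Quotient (QuotientGroup.rightRel S)) * Module.finrank k B :=
    IndGalois.finrank_indAlg
  have hcardG : Fintype.card G
      = Nat.card (Quotient (QuotientGroup.rightRel S)) * Nat.card S := by
    rw [← Nat.card_eq_fintype_card, Subgroup.card_eq_card_quotient_mul_card_subgroup S]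
    congr 1
    exact (Nat.card_congr (QuotientGroup.quotientRightRelEquivQuotientLeftRel S)).symm
  have hn : 0 < Nat.card (Quotient (QuotientGroup.rightRel S)) := by
    haveI : Nonempty (Quotient (QuotientGroup.rightRel S)) :=
      ⟨Quotient.mk (QuotientGroup.rightRel S) 1⟩
    exact Nat.card_pos
  constructor
  · rintro ⟨h1, h2, h3⟩
    refine ⟨?_, IndGalois.noInvariantLeftIdeals_ind h2, (IndGalois.invariantsTrivial_iff).1 h3⟩
    rw [hdim, h1, hcardG, Nat.card_eq_fintype_card (α := ↥S)]
  · rintro ⟨h1, h2, h3⟩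
    refine ⟨?_, IndGalois.noInvariantLeftIdeals_of_ind h2,
      (IndGalois.invariantsTrivial_iff).2 h3⟩
    rw [hdim, hcardG] at h1
    rw [Nat.eq_of_mul_eq_mul_left hn h1, Nat.card_eq_fintype_card (α := ↥S)]
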